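/- In the piecewise setting on [−1,1], for every integer N ≥ 1 the tail sum of the squared integral terms satisfies Σ_{n=N}^∞ A_n² ≤ L²·(K+1)²·(1/(2(2N+1)) + 1/(2(2N−1))), where A_n = −(1/(2√(2n+1)))·Σ_{i=1}^{K+1} ∫_{b_{i−1}}^{b_i} g_i'(y)·(P_{n+1}(y) − P_{n−1}(y)) dy. -/

import Mathlib

/-!
Write `w_n = P_{n+1} - P_{n-1}`. Since `|g_i'| ≤ L` on each piece, the pieces of `A_n` add up to
at most `L ∫_{-1}^1 |w_n|` in absolute value, and by Cauchy–Schwarz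
`(∫ |w_n|)² ≤ 2 ∫ w_n² = 4 (1/(2n+3) + 1/(2n-1))`, the last step being the orthogonality relations
of the Legendre polynomials (repeated integration by parts in Rodrigues' formula, together with
`∫ (1 - y²)^n = 2^(2n+1) (n!)² / (2n+1)!`). Hence `A_n² ≤ 2 L² / ((2n-1)(2n+3))`, and the right-hand
side telescopes: it is the difference of consecutive terms of `1/(2(2n+1)) + 1/(2(2n-1))`.
-/

open MeasureTheory Set

noncomputable def legendreP (n : ℕ) (y : ℝ) : ℝ :=
  (1 / ((2 : ℝ) ^ n * (n.factorial : ℝ))) *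
    iteratedDeriv n (fun x : ℝ => (x ^ 2 - 1) ^ n) y

noncomputable def hzeta (s a : ℝ) : ℝ := ∑' k : ℕ, ((k : ℝ) + a) ^ (-s)

noncomputable def legCoeff (g : ℝ → ℝ) (n : ℕ) : ℝ :=
  (Real.sqrt (2 * (n : ℝ) + 1) / 2) * ∫ y in (-1 : ℝ)..1, g y * legendreP n y

noncomputable def Aterm (K : ℕ) (b : ℕ → ℝ) (G : ℕ → ℝ → ℝ) (n : ℕ) : ℝ :=
  -(1 / (2 * Real.sqrt (2 * (n : ℝ) + 1))) *
    ∑ i ∈ Finset.range (K + 1),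
      ∫ y in (b i)..(b (i + 1)),
        derivWithin (G i) (Set.Icc (b i) (b (i + 1))) y *
          (legendreP (n + 1) y - legendreP (n - 1) y)

noncomputable def Bterm (K : ℕ) (b : ℕ → ℝ) (G : ℕ → ℝ → ℝ) (n : ℕ) : ℝ :=
  (1 / (2 * Real.sqrt (2 * (n : ℝ) + 1))) *
    ∑ i ∈ Finset.Icc 1 K,
      (G (i - 1) (b i) - G i (b i)) *
        (legendreP (n + 1) (b i) - legendreP (n - 1) (b i))

noncomputable def jumpSum (K : ℕ) (b : ℕ → ℝ) (G : ℕ → ℝ → ℝ) : ℝ :=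
  ∑ i ∈ Finset.Icc 1 K, |G i (b i) - G (i - 1) (b i)|

open Polynomial
open scoped Nat

noncomputable def rodriguesPoly (n : ℕ) : ℝ[X] := (X ^ 2 - 1) ^ n

noncomputable def legendrePoly (n : ℕ) : ℝ[X] :=
  C (1 / (2 ^ n * n ! : ℝ)) * derivative^[n] (rodriguesPoly n)

lemma iteratedDeriv_eval (p : ℝ[X]) (k : ℕ) :
    iteratedDeriv k (fun x => p.eval x) = fun x => (derivative^[k] p).eval x := by
  induction k with
  | zero => simp
  | succ k ih =>
    rw [iteratedDeriv_succ, ih, Function.iterate_succ_apply']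
    exact funext fun x => Polynomial.deriv _

lemma legendreP_eq_eval (n : ℕ) : legendreP n = fun y => (legendrePoly n).eval y := by
  have hrod : (fun x : ℝ => (x ^ 2 - 1) ^ n) = fun x => (rodriguesPoly n).eval x := by
    simp [rodriguesPoly]
  ext y
  rw [legendreP, hrod, iteratedDeriv_eval, legendrePoly, eval_mul, eval_C]

lemma continuous_legendreP (n : ℕ) : Continuous (legendreP n) := by
  rw [legendreP_eq_eval]
  exact (legendrePoly n).continuous

lemma eval_iterate_derivative_rodriguesPoly {n k : ℕ} (hk : k < n) {y : ℝ} (hy : y ^ 2 = 1) :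
    (derivative^[k] (rodriguesPoly n)).eval y = 0 := by
  obtain ⟨q, hq⟩ := (dvd_pow_self _ (Nat.sub_ne_zero_of_lt hk)).trans
    (pow_sub_dvd_iterate_derivative_pow (X ^ 2 - 1 : ℝ[X]) n k)
  simp [rodriguesPoly, hq, hy]

lemma natDegree_rodriguesPoly (n : ℕ) : (rodriguesPoly n).natDegree = 2 * n := by
  rw [rodriguesPoly, natDegree_pow, ← C_1, natDegree_X_pow_sub_C, mul_comm]

lemma iterate_derivative_rodriguesPoly_two_mul (n : ℕ) :
    derivative^[2 * n] (rodriguesPoly n) = C ((2 * n) ! : ℝ) := by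
  have hmonic : (rodriguesPoly n).Monic := by
    simpa [rodriguesPoly] using (monic_X_pow_sub_C (1 : ℝ) two_ne_zero).pow n
  have hdeg : (derivative^[2 * n] (rodriguesPoly n)).natDegree = 0 := by
    have := natDegree_iterate_derivative (rodriguesPoly n) (2 * n)
    rw [natDegree_rodriguesPoly] at this
    omega
  rw [eq_C_of_natDegree_eq_zero hdeg, coeff_iterate_derivative, zero_add,
    ← natDegree_rodriguesPoly n, coeff_natDegree, hmonic.leadingCoeff, natDegree_rodriguesPoly,
    Nat.descFactorial_self, nsmul_one]

lemma natDegree_legendrePoly_le (n : ℕ) : (legendrePoly n).natDegree ≤ n := by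
  refine (natDegree_C_mul_le _ _).trans ((natDegree_iterate_derivative _ _).trans ?_)
  rw [natDegree_rodriguesPoly]
  omega

lemma integral_eval_mul_iterate_derivative {a b : ℝ} (p q : ℝ[X]) (n : ℕ)
    (hp : ∀ k < n, (derivative^[k] p).eval a = 0 ∧ (derivative^[k] p).eval b = 0) :
    ∫ y in a..b, q.eval y * (derivative^[n] p).eval y =
      (-1) ^ n * ∫ y in a..b, (derivative^[n] q).eval y * p.eval y := by
  induction n generalizing q with
  | zero => simp
  | succ n ih =>
    obtain ⟨hpa, hpb⟩ := hp n n.lt_succ_self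
    have hibp := intervalIntegral.integral_mul_deriv_eq_deriv_mul
      (fun y _ => q.hasDerivAt y) (fun y _ => (derivative^[n] p).hasDerivAt y)
      ((derivative q).continuous.intervalIntegrable a b)
      ((derivative (derivative^[n] p)).continuous.intervalIntegrable a b)
    rw [Function.iterate_succ_apply', hibp, hpa, hpb,
      ih _ fun k hk => hp k (hk.trans n.lt_succ_self),
      ← Function.iterate_succ_apply derivative]
    ring

lemma integral_eval_mul_legendrePoly (q : ℝ[X]) (n : ℕ) :
    ∫ y in (-1 : ℝ)..1, q.eval y * (legendrePoly n).eval y =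
      (-1) ^ n / (2 ^ n * n !) * ∫ y in (-1 : ℝ)..1,
        (derivative^[n] q).eval y * (rodriguesPoly n).eval y := by
  have hvanish : ∀ k < n, (derivative^[k] (rodriguesPoly n)).eval (-1) = 0 ∧
      (derivative^[k] (rodriguesPoly n)).eval 1 = 0 := fun k hk =>
    ⟨eval_iterate_derivative_rodriguesPoly hk (by norm_num),
      eval_iterate_derivative_rodriguesPoly hk (by norm_num)⟩
  simp only [legendrePoly, eval_mul, eval_C, mul_left_comm (q.eval _),
    intervalIntegral.integral_const_mul,
    integral_eval_mul_iterate_derivative _ q n hvanish]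
  ring

lemma integral_eval_mul_legendrePoly_of_natDegree_lt {q : ℝ[X]} {n : ℕ} (hq : q.natDegree < n) :
    ∫ y in (-1 : ℝ)..1, q.eval y * (legendrePoly n).eval y = 0 := by
  simp [integral_eval_mul_legendrePoly, iterate_derivative_eq_zero hq]

lemma integral_one_sub_sq_pow_succ (n : ℕ) :
    (2 * n + 3 : ℝ) * ∫ y in (-1 : ℝ)..1, (1 - y ^ 2) ^ (n + 1) =
      (2 * n + 2 : ℝ) * ∫ y in (-1 : ℝ)..1, (1 - y ^ 2) ^ n := by
  have hderiv : ∀ x : ℝ, HasDerivAt (fun x => x * (1 - x ^ 2) ^ (n + 1))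
      ((2 * n + 3) * (1 - x ^ 2) ^ (n + 1) - (2 * n + 2) * (1 - x ^ 2) ^ n) x := by
    intro x
    have hsq : HasDerivAt (fun x : ℝ => 1 - x ^ 2) (-(2 * x)) x := by
      simpa using (hasDerivAt_pow 2 x).const_sub 1
    refine ((hasDerivAt_id' x).fun_mul (hsq.fun_pow (n + 1))).congr_deriv ?_
    push_cast
    ring
  have hint : ∀ (c : ℝ) (k : ℕ),
      IntervalIntegrable (fun y : ℝ => c * (1 - y ^ 2) ^ k) volume (-1) 1 :=
    fun c k => (by fun_prop : Continuous _).intervalIntegrable _ _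
  have hftc := intervalIntegral.integral_eq_sub_of_hasDerivAt (fun x _ => hderiv x)
    ((hint _ _).sub (hint _ _))
  rw [intervalIntegral.integral_sub (hint _ _) (hint _ _), intervalIntegral.integral_const_mul,
    intervalIntegral.integral_const_mul] at hftc
  norm_num at hftc
  linarith

lemma factorial_mul_integral_one_sub_sq_pow (n : ℕ) :
    ((2 * n + 1) ! : ℝ) * ∫ y in (-1 : ℝ)..1, (1 - y ^ 2) ^ n =
      2 ^ (2 * n + 1) * (n ! : ℝ) ^ 2 := by
  induction n with
  | zero => norm_num
  | succ n ih =>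
    have hfac : ((2 * (n + 1) + 1) ! : ℝ) = (2 * n + 2) * (2 * n + 1) ! * (2 * n + 3) := by
      rw [show 2 * (n + 1) + 1 = 2 * n + 1 + 1 + 1 by ring, Nat.factorial_succ, Nat.factorial_succ]
      push_cast
      ring
    rw [hfac, mul_assoc, integral_one_sub_sq_pow_succ, Nat.factorial_succ n, pow_succ, pow_succ]
    push_cast
    linear_combination (2 * (n : ℝ) + 2) ^ 2 * ih

lemma integral_legendreP_sq (n : ℕ) :
    ∫ y in (-1 : ℝ)..1, legendreP n y ^ 2 = 2 / (2 * n + 1) := by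
  have hderiv : derivative^[n] (legendrePoly n) = C (1 / (2 ^ n * n ! : ℝ) * (2 * n) !) := by
    rw [legendrePoly, iterate_derivative_C_mul, ← Function.iterate_add_apply, ← two_mul,
      iterate_derivative_rodriguesPoly_two_mul, C_mul]
  have hrod : ∀ y : ℝ, (rodriguesPoly n).eval y = (-1) ^ n * (1 - y ^ 2) ^ n := fun y => by
    simp [rodriguesPoly, ← mul_pow]
  have hnorm := factorial_mul_integral_one_sub_sq_pow n
  simp only [legendreP_eq_eval, sq (eval _ _), integral_eval_mul_legendrePoly, hderiv, eval_C, hrod,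
    intervalIntegral.integral_const_mul]
  rw [Nat.factorial_succ] at hnorm
  push_cast at hnorm
  have hsign : ((-1 : ℝ) ^ n) ^ 2 = 1 := by rw [← pow_mul, pow_mul', neg_one_sq, one_pow]
  rw [eq_div_iff (by positivity)]
  field_simp
  linear_combination (-1 : ℝ) ^ (n * 2) * hnorm + 2 ^ (2 * n + 1) * (n ! : ℝ) ^ 2 * hsign

lemma integral_legendreP_mul_of_lt {m n : ℕ} (hmn : m < n) :
    ∫ y in (-1 : ℝ)..1, legendreP m y * legendreP n y = 0 := by
  simpa [legendreP_eq_eval] using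
    integral_eval_mul_legendrePoly_of_natDegree_lt ((natDegree_legendrePoly_le m).trans_lt hmn)

lemma integral_legendreP_sub_sq {m n : ℕ} (hmn : m < n) :
    ∫ y in (-1 : ℝ)..1, (legendreP n y - legendreP m y) ^ 2 =
      2 / (2 * n + 1) + 2 / (2 * m + 1) := by
  have hint : ∀ f : ℝ → ℝ, Continuous f → IntervalIntegrable f volume (-1) 1 :=
    fun f hf => hf.intervalIntegrable _ _
  have hcont := continuous_legendreP
  calc ∫ y in (-1 : ℝ)..1, (legendreP n y - legendreP m y) ^ 2
      = ∫ y in (-1 : ℝ)..1,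
          (legendreP n y ^ 2 + legendreP m y ^ 2 - 2 * (legendreP m y * legendreP n y)) := by
        congr 1; ext y; ring
    _ = (∫ y in (-1 : ℝ)..1, legendreP n y ^ 2) + (∫ y in (-1 : ℝ)..1, legendreP m y ^ 2)
          - 2 * ∫ y in (-1 : ℝ)..1, legendreP m y * legendreP n y := by
        rw [intervalIntegral.integral_sub, intervalIntegral.integral_add,
          intervalIntegral.integral_const_mul]
        all_goals apply hint; fun_prop
    _ = 2 / (2 * n + 1) + 2 / (2 * m + 1) := by
        rw [integral_legendreP_sq, integral_legendreP_sq, integral_legendreP_mul_of_lt hmn]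
        ring

lemma sq_integral_abs_le {f : ℝ → ℝ} (hf : Continuous f) {a b : ℝ} (hab : a ≤ b) :
    (∫ x in a..b, |f x|) ^ 2 ≤ (b - a) * ∫ x in a..b, f x ^ 2 := by
  set A := ∫ x in a..b, |f x|
  set I := ∫ x in a..b, f x ^ 2
  have hint : ∀ g : ℝ → ℝ, Continuous g → IntervalIntegrable g volume a b :=
    fun g hg => hg.intervalIntegrable _ _
  have hsq : 0 ≤ ∫ x in a..b, ((b - a) * |f x| - A) ^ 2 :=
    intervalIntegral.integral_nonneg hab fun x _ => sq_nonneg _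
  have hexpand : ∫ x in a..b, ((b - a) * |f x| - A) ^ 2 = (b - a) * ((b - a) * I - A ^ 2) := by
    calc ∫ x in a..b, ((b - a) * |f x| - A) ^ 2
        = ∫ x in a..b, ((b - a) ^ 2 * f x ^ 2 - 2 * (b - a) * A * |f x| + A ^ 2) := by
          congr 1; ext x; rw [← sq_abs (f x)]; ring
      _ = (b - a) ^ 2 * I - 2 * (b - a) * A * A + (b - a) * A ^ 2 := by
          rw [intervalIntegral.integral_add, intervalIntegral.integral_sub,
            intervalIntegral.integral_const_mul, intervalIntegral.integral_const_mul,
            intervalIntegral.integral_const, smul_eq_mul]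
          all_goals apply hint; fun_prop
      _ = (b - a) * ((b - a) * I - A ^ 2) := by ring
  rcases hab.eq_or_lt with rfl | hlt
  · simp [A]
  · exact sub_nonneg.mp (nonneg_of_mul_nonneg_right (hexpand ▸ hsq) (sub_pos.mpr hlt))

lemma abs_sum_integral_mul_le {n : ℕ} {b : ℕ → ℝ} (hb : ∀ i < n, b i ≤ b (i + 1))
    {f : ℕ → ℝ → ℝ} {L : ℝ} (hf : ∀ i < n, ∀ y ∈ Icc (b i) (b (i + 1)), |f i y| ≤ L)
    {w : ℝ → ℝ} (hw : Continuous w) :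
    |∑ i ∈ Finset.range n, ∫ y in b i..b (i + 1), f i y * w y| ≤ L * ∫ y in b 0..b n, |w y| := by
  have hint : ∀ i, IntervalIntegrable (fun y => L * |w y|) volume (b i) (b (i + 1)) :=
    fun i => (continuous_const.mul hw.abs).intervalIntegrable _ _
  calc |∑ i ∈ Finset.range n, ∫ y in b i..b (i + 1), f i y * w y|
      ≤ ∑ i ∈ Finset.range n, |∫ y in b i..b (i + 1), f i y * w y| := Finset.abs_sum_le_sum_abs _ _
    _ ≤ ∑ i ∈ Finset.range n, ∫ y in b i..b (i + 1), L * |w y| := by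
        refine Finset.sum_le_sum fun i hi => ?_
        have hi := Finset.mem_range.mp hi
        rw [← Real.norm_eq_abs]
        refine intervalIntegral.norm_integral_le_of_norm_le (hb i hi)
          (Filter.Eventually.of_forall fun y hy => ?_) (hint i)
        rw [Real.norm_eq_abs, abs_mul]
        exact mul_le_mul_of_nonneg_right (hf i hi y (Ioc_subset_Icc_self hy)) (abs_nonneg _)
    _ = L * ∫ y in b 0..b n, |w y| := by
        rw [intervalIntegral.sum_integral_adjacent_intervals fun i _ => hint i,
          intervalIntegral.integral_const_mul]

lemma Aterm_sq_le {K : ℕ} {b : ℕ → ℝ} {L : ℝ} {G : ℕ → ℝ → ℝ}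
    (hb0 : b 0 = -1) (hbK : b (K + 1) = 1) (hbmono : ∀ i ≤ K, b i ≤ b (i + 1))
    (hGder : ∀ i ≤ K, ∀ y ∈ Icc (b i) (b (i + 1)),
      |derivWithin (G i) (Icc (b i) (b (i + 1))) y| ≤ L)
    {n : ℕ} (hn : 1 ≤ n) :
    Aterm K b G n ^ 2 ≤ L ^ 2 * (2 / ((2 * n - 1) * (2 * n + 3))) := by
  set w := fun y => legendreP (n + 1) y - legendreP (n - 1) y
  have hw : Continuous w := (continuous_legendreP _).sub (continuous_legendreP _)
  set S := ∑ i ∈ Finset.range (K + 1),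
    ∫ y in b i..b (i + 1), derivWithin (G i) (Icc (b i) (b (i + 1))) y * w y
  have hS : |S| ≤ L * ∫ y in (-1 : ℝ)..1, |w y| := by
    rw [← hb0, ← hbK]
    exact abs_sum_integral_mul_le (fun i hi => hbmono i (Nat.lt_succ_iff.mp hi))
      (fun i hi => hGder i (Nat.lt_succ_iff.mp hi)) hw
  have hwnorm : (∫ y in (-1 : ℝ)..1, |w y|) ^ 2 ≤ 4 * (1 / (2 * n + 3) + 1 / (2 * n - 1)) := by
    have hcs := sq_integral_abs_le hw (by norm_num : (-1 : ℝ) ≤ 1)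
    rw [integral_legendreP_sub_sq (by omega : n - 1 < n + 1), Nat.cast_sub hn] at hcs
    convert hcs using 1
    push_cast
    ring
  have hA : Aterm K b G n ^ 2 = S ^ 2 / (4 * (2 * n + 1)) := by
    rw [Aterm, mul_pow, neg_sq, div_pow, mul_pow, Real.sq_sqrt (by positivity)]
    ring
  have hn' : (2 * n - 1 : ℝ) ≠ 0 := by
    have : (1 : ℝ) ≤ n := by exact_mod_cast hn
    linarith
  have hS2 : S ^ 2 ≤ L ^ 2 * (4 * (1 / (2 * n + 3) + 1 / (2 * n - 1))) := by
    rw [← sq_abs S]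
    calc |S| ^ 2 ≤ (L * ∫ y in (-1 : ℝ)..1, |w y|) ^ 2 := pow_le_pow_left₀ (abs_nonneg S) hS 2
      _ ≤ _ := by rw [mul_pow]; gcongr
  rw [hA, div_le_iff₀ (by positivity)]
  refine hS2.trans_eq ?_
  field_simp
  ring

lemma tsum_le_of_le_sub_succ {a F : ℕ → ℝ} (ha : ∀ k, 0 ≤ a k) (hF : ∀ k, 0 ≤ F k)
    (h : ∀ k, a k ≤ F k - F (k + 1)) : ∑' k, a k ≤ F 0 :=
  Real.tsum_le_of_sum_range_le ha fun m => by
    linarith [Finset.sum_le_sum fun k (_ : k ∈ Finset.range m) => h k,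
      Finset.sum_range_sub' F m, hF m]

theorem tsum_Aterm_sq_le_general
    (K : ℕ) (b : ℕ → ℝ) (L : ℝ) (G : ℕ → ℝ → ℝ)
    (hb0 : b 0 = -1) (hbK : b (K + 1) = 1)
    (hbmono : ∀ i ≤ K, b i < b (i + 1))
    (hGder : ∀ i ≤ K, ∀ y ∈ Set.Icc (b i) (b (i + 1)),
      |derivWithin (G i) (Set.Icc (b i) (b (i + 1))) y| ≤ L)
    (N : ℕ) (hN : 1 ≤ N) :
    (∑' k : ℕ, Aterm K b G (N + k) ^ 2) ≤
      L ^ 2 * ((K : ℝ) + 1) ^ 2 *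
        (1 / (2 * (2 * (N : ℝ) + 1)) + 1 / (2 * (2 * (N : ℝ) - 1))) := by
  set F : ℕ → ℝ := fun n => 1 / (2 * (2 * n + 1)) + 1 / (2 * (2 * n - 1))
  have hF : ∀ n, 1 ≤ n → 0 ≤ F n := fun n hn => by
    have : (1 : ℝ) ≤ n := by exact_mod_cast hn
    have : (0 : ℝ) < 2 * n - 1 := by linarith
    positivity
  have hF_sub : ∀ n, 1 ≤ n → F n - F (n + 1) = 2 / ((2 * n - 1) * (2 * n + 3)) := fun n hn => by
    have : (1 : ℝ) ≤ n := by exact_mod_cast hn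
    have : (2 * n - 1 : ℝ) ≠ 0 := by linarith
    have : (2 * (n + 1) - 1 : ℝ) ≠ 0 := by linarith
    have : (2 * n + 1 : ℝ) ≠ 0 := by positivity
    simp only [F]
    push_cast
    field_simp
    ring
  have htail : ∑' k, Aterm K b G (N + k) ^ 2 ≤ L ^ 2 * F N :=
    tsum_le_of_le_sub_succ (F := fun k => L ^ 2 * F (N + k)) (fun _ => sq_nonneg _)
      (fun k => mul_nonneg (sq_nonneg L) (hF _ (by omega))) fun k => by
        rw [← add_assoc, ← mul_sub, hF_sub _ (by omega)]
        exact Aterm_sq_le hb0 hbK (fun i hi => (hbmono i hi).le) hGder (by omega)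
  calc ∑' k, Aterm K b G (N + k) ^ 2 ≤ L ^ 2 * F N := htail
    _ ≤ L ^ 2 * ((K : ℝ) + 1) ^ 2 * F N := by
        rw [mul_right_comm]
        exact le_mul_of_one_le_right (mul_nonneg (sq_nonneg L) (hF N hN))
          (one_le_pow₀ (by linarith))

/-- tail sum of the squared integral terms. -/
theorem tsum_Aterm_sq_le
    (K : ℕ) (b : ℕ → ℝ) (L : ℝ) (G : ℕ → ℝ → ℝ) (g : ℝ → ℝ)
    (hb0 : b 0 = -1) (hbK : b (K + 1) = 1)
    (hbmono : ∀ i ≤ K, b i < b (i + 1))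
    (hL : 0 ≤ L)
    (hG : ∀ i ≤ K, ContDiffOn ℝ 1 (G i) (Set.Icc (b i) (b (i + 1))))
    (hGder : ∀ i ≤ K, ∀ y ∈ Set.Icc (b i) (b (i + 1)),
      |derivWithin (G i) (Set.Icc (b i) (b (i + 1))) y| ≤ L)
    (hg1 : ∀ i < K, ∀ y, b i ≤ y → y < b (i + 1) → g y = G i y)
    (hg2 : ∀ y ∈ Set.Icc (b K) (b (K + 1)), g y = G K y)
    (N : ℕ) (hN : 1 ≤ N) :
    (∑' k : ℕ, Aterm K b G (N + k) ^ 2) ≤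
      L ^ 2 * ((K : ℝ) + 1) ^ 2 *
        (1 / (2 * (2 * (N : ℝ) + 1)) + 1 / (2 * (2 * (N : ℝ) - 1))) :=
  tsum_Aterm_sq_le_general K b L G hb0 hbK hbmono hGder N hN
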